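/- Let K be a positive integer and let (μ, Ω, Λ) and (μ̃, Ω̃, Λ̃) be MSN parameters: μ, μ̃, Λ, Λ̃ ∈ ℝ^K and Ω, Ω̃ K×K positive definite, with Δ = Ω^{1/2}·Λ/√(1+ΛᵀΛ), Γ = Ω − ΔΔᵀ, and analogously Δ̃, Γ̃. Let MGF and M̃GF denote the corresponding MSN moment generating functions MGF(t) = 2·exp(tᵀμ + ½·tᵀΩt)·Φ(Δᵀt) and M̃GF(t) = 2·exp(tᵀμ̃ + ½·tᵀΩ̃t)·Φ(Δ̃ᵀt). For every t ∈ ℝ^K with Δᵀt ≤ 0 and tᵀ(Γ̃ − Γ)t > 0, lim_{c→∞} MGF(ct)/M̃GF(ct) = 0. -/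

import Mathlib

open Filter Matrix MeasureTheory

noncomputable section

/-- Standard normal cdf Φ. -/
def stdNormalCdf (x : ℝ) : ℝ :=
  ∫ u in Set.Iio x, (Real.sqrt (2 * Real.pi))⁻¹ * Real.exp (-(u ^ 2) / 2)

/-- The Δ parameter of MSN(μ, Ω, Λ): Δ = Ω^{1/2}·Λ/√(1+ΛᵀΛ). -/
def msnDelta {K : ℕ} (Ω : Matrix (Fin K) (Fin K) ℝ) (hΩ : Ω.PosDef)
    (Λ : Fin K → ℝ) : Fin K → ℝ :=
  (Real.sqrt (1 + Λ ⬝ᵥ Λ))⁻¹ • (hΩ.posSemidef.1.eigenvectorUnitary.1 *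
    diagonal ((RCLike.ofReal : ℝ → ℝ) ∘ (Real.sqrt ∘ hΩ.posSemidef.1.eigenvalues)) *
    (star hΩ.posSemidef.1.eigenvectorUnitary : Matrix (Fin K) (Fin K) ℝ)).mulVec Λ

/-- The Γ parameter of MSN(μ, Ω, Λ): Γ = Ω − ΔΔᵀ. -/
def msnGamma {K : ℕ} (Ω : Matrix (Fin K) (Fin K) ℝ) (hΩ : Ω.PosDef)
    (Λ : Fin K → ℝ) : Matrix (Fin K) (Fin K) ℝ :=
  Ω - vecMulVec (msnDelta Ω hΩ Λ) (msnDelta Ω hΩ Λ)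

/-- The MSN moment generating function. -/
def msnMGF {K : ℕ} (μ : Fin K → ℝ) (Ω : Matrix (Fin K) (Fin K) ℝ) (hΩ : Ω.PosDef)
    (Λ : Fin K → ℝ) (t : Fin K → ℝ) : ℝ :=
  2 * Real.exp (t ⬝ᵥ μ + t ⬝ᵥ Ω.mulVec t / 2) * stdNormalCdf (msnDelta Ω hΩ Λ ⬝ᵥ t)

/-! Along the ray `c • t`, `MGF(t) = 2 exp (tᵀμ + tᵀΓt / 2) · e^{(Δᵀt)² / 2} Φ(Δᵀt)`. The Chernoff
bound gives `e^{x² / 2} Φ(x) ≤ 1` for `x ≤ 0`, and for every `x` one has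
`e^{x² / 2} Φ(x) ≥ e^{-|x| - 1/2} / √(2π)`. So the ratio of the two MGFs at `c • t` is at most
`√(2π) exp (1/2 + b c - c² tᵀ(Γ̃ - Γ)t / 2)` for some `b`, and the Gaussian factor wins. -/

open ProbabilityTheory Set

lemma stdNormalCdf_eq_setIntegral (x : ℝ) :
    stdNormalCdf x = ∫ u in Iio x, gaussianPDFReal 0 1 u := by
  simp [stdNormalCdf, gaussianPDFReal]

/-- Chernoff bound: on `u < x ≤ 0` the tilt `exp (x u - x²)` is at least `1`, and it turns the
standard density into `exp (-x² / 2)` times the density of `N(x, 1)`. -/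
lemma stdNormalCdf_le_exp {x : ℝ} (hx : x ≤ 0) : stdNormalCdf x ≤ Real.exp (-(x ^ 2) / 2) := by
  have tilt : ∀ u, gaussianPDFReal 0 1 u * Real.exp (x * u - x ^ 2)
      = Real.exp (-(x ^ 2) / 2) * gaussianPDFReal x 1 u := by
    intro u
    simp only [gaussianPDFReal, NNReal.coe_one, mul_one, sub_zero]
    rw [mul_comm (Real.exp _), mul_assoc, mul_assoc, ← Real.exp_add, ← Real.exp_add]
    ring_nf
  have tilt_integrable : Integrable fun u => gaussianPDFReal 0 1 u * Real.exp (x * u - x ^ 2) := by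
    simp_rw [tilt]
    exact (integrable_gaussianPDFReal x 1).const_mul _
  rw [stdNormalCdf_eq_setIntegral]
  calc ∫ u in Iio x, gaussianPDFReal 0 1 u
      ≤ ∫ u in Iio x, gaussianPDFReal 0 1 u * Real.exp (x * u - x ^ 2) := by
        refine setIntegral_mono_on (integrable_gaussianPDFReal 0 1).integrableOn
          tilt_integrable.integrableOn measurableSet_Iio fun u hu => ?_
        refine le_mul_of_one_le_right (gaussianPDFReal_nonneg _ _ _) (Real.one_le_exp ?_)
        nlinarith [mul_nonneg (neg_nonneg.2 hx) (sub_nonneg.2 (le_of_lt hu))]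
    _ ≤ ∫ u, gaussianPDFReal 0 1 u * Real.exp (x * u - x ^ 2) :=
        setIntegral_le_integral tilt_integrable
          (Eventually.of_forall fun u =>
            mul_nonneg (gaussianPDFReal_nonneg _ _ _) (Real.exp_nonneg _))
    _ = Real.exp (-(x ^ 2) / 2) := by
        simp_rw [tilt]
        rw [integral_const_mul, integral_gaussianPDFReal_eq_one x one_ne_zero, mul_one]

/-- The density is at least its value at `|x| + 1` on the unit interval `(x - 1, x)`. -/
lemma exp_le_stdNormalCdf (x : ℝ) :
    (Real.sqrt (2 * Real.pi))⁻¹ * Real.exp (-(|x| + 1) ^ 2 / 2) ≤ stdNormalCdf x := by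
  have density_ge : ∀ u ∈ Ioo (x - 1) x,
      (Real.sqrt (2 * Real.pi))⁻¹ * Real.exp (-(|x| + 1) ^ 2 / 2) ≤ gaussianPDFReal 0 1 u := by
    rintro u ⟨hxu, hux⟩
    have hu : u ^ 2 ≤ (|x| + 1) ^ 2 :=
      sq_le_sq' (by linarith [neg_abs_le x]) (by linarith [le_abs_self x])
    simp only [gaussianPDFReal, NNReal.coe_one, mul_one, sub_zero]
    gcongr
  rw [stdNormalCdf_eq_setIntegral]
  calc (Real.sqrt (2 * Real.pi))⁻¹ * Real.exp (-(|x| + 1) ^ 2 / 2)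
      = ∫ _ in Ioo (x - 1) x, (Real.sqrt (2 * Real.pi))⁻¹ * Real.exp (-(|x| + 1) ^ 2 / 2) := by
        simp
    _ ≤ ∫ u in Ioo (x - 1) x, gaussianPDFReal 0 1 u :=
        setIntegral_mono_on (integrableOn_const measure_Ioo_lt_top.ne)
          (integrable_gaussianPDFReal 0 1).integrableOn measurableSet_Ioo density_ge
    _ ≤ ∫ u in Iio x, gaussianPDFReal 0 1 u :=
        setIntegral_mono_set (integrable_gaussianPDFReal 0 1).integrableOn
          (Eventually.of_forall (gaussianPDFReal_nonneg 0 1))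
          (Ioo_subset_Iio_self.eventuallyLE)

lemma stdNormalCdf_pos (x : ℝ) : 0 < stdNormalCdf x :=
  lt_of_lt_of_le (by positivity) (exp_le_stdNormalCdf x)

lemma msnMGF_pos {K : ℕ} (μ : Fin K → ℝ) (Ω : Matrix (Fin K) (Fin K) ℝ) (hΩ : Ω.PosDef)
    (Λ t : Fin K → ℝ) : 0 < msnMGF μ Ω hΩ Λ t := by
  have := stdNormalCdf_pos (msnDelta Ω hΩ Λ ⬝ᵥ t)
  unfold msnMGF
  positivity

lemma dotProduct_msnGamma_mulVec {K : ℕ} (Ω : Matrix (Fin K) (Fin K) ℝ) (hΩ : Ω.PosDef)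
    (Λ t : Fin K → ℝ) :
    t ⬝ᵥ msnGamma Ω hΩ Λ *ᵥ t = t ⬝ᵥ Ω *ᵥ t - (msnDelta Ω hΩ Λ ⬝ᵥ t) ^ 2 := by
  simp [msnGamma, sub_mulVec, vecMulVec_mulVec, dotProduct_comm t, sq]

lemma msnMGF_div_le {K : ℕ} (μ Λ μ' Λ' : Fin K → ℝ) (Ω Ω' : Matrix (Fin K) (Fin K) ℝ)
    (hΩ : Ω.PosDef) (hΩ' : Ω'.PosDef) (t : Fin K → ℝ) (hΔ : msnDelta Ω hΩ Λ ⬝ᵥ t ≤ 0) :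
    msnMGF μ Ω hΩ Λ t / msnMGF μ' Ω' hΩ' Λ' t
      ≤ Real.sqrt (2 * Real.pi) * Real.exp (t ⬝ᵥ μ - t ⬝ᵥ μ' + |msnDelta Ω' hΩ' Λ' ⬝ᵥ t| + 1 / 2
        - t ⬝ᵥ (msnGamma Ω' hΩ' Λ' - msnGamma Ω hΩ Λ) *ᵥ t / 2) := by
  have hΓ := dotProduct_msnGamma_mulVec Ω hΩ Λ t
  have hΓ' := dotProduct_msnGamma_mulVec Ω' hΩ' Λ' t
  rw [sub_mulVec, dotProduct_sub, hΓ, hΓ', div_le_iff₀ (msnMGF_pos _ _ _ _ _)]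
  have upper := stdNormalCdf_le_exp hΔ
  have lower := exp_le_stdNormalCdf (msnDelta Ω' hΩ' Λ' ⬝ᵥ t)
  unfold msnMGF
  set D := msnDelta Ω hΩ Λ ⬝ᵥ t
  set D' := msnDelta Ω' hΩ' Λ' ⬝ᵥ t
  calc 2 * Real.exp (t ⬝ᵥ μ + t ⬝ᵥ Ω *ᵥ t / 2) * stdNormalCdf D
      ≤ 2 * Real.exp (t ⬝ᵥ μ + t ⬝ᵥ Ω *ᵥ t / 2) * Real.exp (-(D ^ 2) / 2) := by gcongr
    _ = Real.sqrt (2 * Real.pi) * Real.exp (t ⬝ᵥ μ - t ⬝ᵥ μ' + |D'| + 1 / 2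
          - (t ⬝ᵥ Ω' *ᵥ t - D' ^ 2 - (t ⬝ᵥ Ω *ᵥ t - D ^ 2)) / 2)
        * (2 * Real.exp (t ⬝ᵥ μ' + t ⬝ᵥ Ω' *ᵥ t / 2)
          * ((Real.sqrt (2 * Real.pi))⁻¹ * Real.exp (-(|D'| + 1) ^ 2 / 2))) := by
      field_simp
      simp only [← Real.exp_add]
      congr 1
      linear_combination (1 / 2) * sq_abs D'
    _ ≤ _ := by gcongr

lemma tendsto_exp_quadratic_atTop {a b ε : ℝ} (hε : 0 < ε) :
    Tendsto (fun c : ℝ => Real.exp (a + b * c - ε * c ^ 2)) atTop (nhds 0) := by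
  have hquad : Tendsto (fun c : ℝ => c * (b + -(ε * c))) atTop atBot :=
    tendsto_id.atTop_mul_atBot₀ <| tendsto_atBot_add_const_left _ b <|
      tendsto_neg_atTop_atBot.comp (tendsto_id.const_mul_atTop hε)
  exact Real.tendsto_exp_atBot.comp
    ((tendsto_atBot_add_const_left _ a hquad).congr fun c => by ring)

theorem stmt14_general (K : ℕ)
    (μ Λ μ' Λ' : Fin K → ℝ) (Ω Ω' : Matrix (Fin K) (Fin K) ℝ)
    (hΩ : Ω.PosDef) (hΩ' : Ω'.PosDef) :
    ∀ t : Fin K → ℝ, msnDelta Ω hΩ Λ ⬝ᵥ t ≤ 0 →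
      0 < t ⬝ᵥ (msnGamma Ω' hΩ' Λ' - msnGamma Ω hΩ Λ).mulVec t →
      Tendsto (fun c : ℝ => msnMGF μ Ω hΩ Λ (c • t) / msnMGF μ' Ω' hΩ' Λ' (c • t))
        atTop (nhds 0) := by
  intro t hΔ hΓ
  set ε := t ⬝ᵥ (msnGamma Ω' hΩ' Λ' - msnGamma Ω hΩ Λ) *ᵥ t
  set b := t ⬝ᵥ μ - t ⬝ᵥ μ' + |msnDelta Ω' hΩ' Λ' ⬝ᵥ t|
  have bound : ∀ᶠ c in atTop, msnMGF μ Ω hΩ Λ (c • t) / msnMGF μ' Ω' hΩ' Λ' (c • t)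
      ≤ Real.sqrt (2 * Real.pi) * Real.exp (1 / 2 + b * c - ε / 2 * c ^ 2) := by
    filter_upwards [eventually_ge_atTop 0] with c hc
    have hΔc : msnDelta Ω hΩ Λ ⬝ᵥ (c • t) ≤ 0 := by
      rw [dotProduct_smul, smul_eq_mul]
      exact mul_nonpos_of_nonneg_of_nonpos hc hΔ
    refine (msnMGF_div_le μ Λ μ' Λ' Ω Ω' hΩ hΩ' (c • t) hΔc).trans_eq ?_
    simp only [dotProduct_smul, smul_dotProduct, mulVec_smul, smul_eq_mul, abs_mul,
      abs_of_nonneg hc, b, ε]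
    ring_nf
  have lim := (tendsto_exp_quadratic_atTop (a := 1 / 2) (b := b) (half_pos hΓ)).const_mul
    (Real.sqrt (2 * Real.pi))
  rw [mul_zero] at lim
  exact squeeze_zero'
    (Eventually.of_forall fun c => div_nonneg (msnMGF_pos _ _ _ _ _).le (msnMGF_pos _ _ _ _ _).le)
    bound lim

theorem stmt14 (K : ℕ) (hK : 0 < K)
    (μ Λ μ' Λ' : Fin K → ℝ) (Ω Ω' : Matrix (Fin K) (Fin K) ℝ)
    (hΩ : Ω.PosDef) (hΩ' : Ω'.PosDef) :
    ∀ t : Fin K → ℝ, msnDelta Ω hΩ Λ ⬝ᵥ t ≤ 0 →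
      0 < t ⬝ᵥ (msnGamma Ω' hΩ' Λ' - msnGamma Ω hΩ Λ).mulVec t →
      Tendsto (fun c : ℝ => msnMGF μ Ω hΩ Λ (c • t) / msnMGF μ' Ω' hΩ' Λ' (c • t))
        atTop (nhds 0) :=
  stmt14_general K μ Λ μ' Λ' Ω Ω' hΩ hΩ'
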